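/- arXiv:2102.11306 — 2 statements merged into one kernel-verified Lean document; each statement's English description precedes it below -/
import Mathlib

section
/- Let w = w_0w_1⋯w_n be a generalized snake word of length n ≥ 1, let k be the largest index with w_k ≠ w_n (0 ≤ k ≤ n−1), and set v_m := e(P(w_0⋯w_m)) for 0 ≤ m ≤ n and v_{−1} := 1. Then v_n = Cat(n−k+1)·v_k + (Cat(n−k+2) − 2·Cat(n−k+1))·v_{k−1}, where Cat(m) = (1/(m+1))·binomial(2m, m) is the m-th Catalan number; equivalently (avoiding subtraction), v_n + 2·Cat(n−k+1)·v_{k−1} = Cat(n−k+1)·v_k + Cat(n−k+2)·v_{k−1}. (Here v_0 = e(P(ε)) = 2.) -/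
/-- The two-letter alphabet `{L, R}` for generalized snake words. -/
inductive Letter : Type
  | L
  | R
  deriving DecidableEq

/-- The element of the generalized snake poset covered by `2m+2` (besides the relations
coming from `2m+3`): it is `2m-1` when the word turns at the `m`-th letter
(i.e. `m = 1` and `w 1 = L`, or `m ≥ 2` and `w (m-1) ≠ w m`), and `2m` otherwise. -/
def snakeSide (w : ℕ → Letter) (m : ℕ) : ℕ :=
  if (m = 1 ∧ w 1 = Letter.L) ∨ (2 ≤ m ∧ w (m - 1) ≠ w m) then 2 * m - 1 else 2 * m

/-- The covering relation of the generalized snake poset `P(w)` for the word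
`ε w₁ ⋯ w_n` (the letter `w i` for `1 ≤ i ≤ n` is the `i`-th letter).
`SnakeCov n w a b` means `a ≺ b`, i.e. `a` is covered by `b`. -/
inductive SnakeCov (n : ℕ) (w : ℕ → Letter) : ℕ → ℕ → Prop
  | cov10 : SnakeCov n w 1 0
  | cov20 : SnakeCov n w 2 0
  | cov31 : SnakeCov n w 3 1
  | cov32 : SnakeCov n w 3 2
  | covOdd (m : ℕ) (h1 : 1 ≤ m) (h2 : m ≤ n) : SnakeCov n w (2 * m + 3) (2 * m + 1)
  | covBot (m : ℕ) (h1 : 1 ≤ m) (h2 : m ≤ n) : SnakeCov n w (2 * m + 3) (2 * m + 2)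
  | covSide (m : ℕ) (h1 : 1 ≤ m) (h2 : m ≤ n) : SnakeCov n w (2 * m + 2) (snakeSide w m)

/-- The order relation of the generalized snake poset `P(w)` on `{0, …, 2n+3}`:
the reflexive-transitive closure of the covering relation. -/
def SnakeLE (n : ℕ) (w : ℕ → Letter) : ℕ → ℕ → Prop :=
  Relation.ReflTransGen (SnakeCov n w)

theorem snakeCov_lt {n : ℕ} {w : ℕ → Letter} {a b : ℕ} (h : SnakeCov n w a b) : b < a := by
  cases h
  case covSide m h1 h2 => unfold snakeSide; split <;> omega
  all_goals omega

theorem snakeLE_le {n : ℕ} {w : ℕ → Letter} {a b : ℕ} (h : SnakeLE n w a b) : b ≤ a := by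
  induction h with
  | refl => exact le_refl a
  | tail _ hc ih => exact le_trans (le_of_lt (snakeCov_lt hc)) ih

/-- The generalized snake poset `P(ε w₁ ⋯ w_n)` as a type: its elements are `0, 1, …, 2n+3`. -/
def SnakePoset (n : ℕ) (w : ℕ → Letter) : Type := Fin (2 * n + 4)

instance (n : ℕ) (w : ℕ → Letter) : PartialOrder (SnakePoset n w) where
  le a b := SnakeLE n w a.1 b.1
  le_refl _ := Relation.ReflTransGen.refl
  le_trans _ _ _ h1 h2 := Relation.ReflTransGen.trans h1 h2
  le_antisymm a b h1 h2 := Fin.ext (Nat.le_antisymm (snakeLE_le h2) (snakeLE_le h1))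

/-- The number of linear extensions of `P(ε w₁ ⋯ w_n)`: order-preserving bijections
onto the chain `Fin (2n+4)`.  By Stanley's theorem this is the normalized volume of
the order polytope `O(P(w))`. -/
noncomputable def linExtCount (n : ℕ) (w : ℕ → Letter) : ℕ :=
  Nat.card {f : SnakePoset n w ≃ Fin (2 * n + 4) //
    ∀ a b : SnakePoset n w, a ≤ b → f a ≤ f b}

/-- The collection of filters (upper order ideals) of `P(ε w₁ ⋯ w_n)`,
as subsets of `{0, …, 2n+3} ⊆ ℕ`. -/
def SnakeFilters (n : ℕ) (w : ℕ → Letter) : Set (Set ℕ) :=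
  {A | (∀ a ∈ A, a < 2 * n + 4) ∧ ∀ a ∈ A, ∀ b, SnakeLE n w a b → b ∈ A}

/-- The filter of `P(ε w₁ ⋯ w_n)` generated by a set `S`: its upward closure. -/
def snakeUp (n : ℕ) (w : ℕ → Letter) (S : Set ℕ) : Set ℕ :=
  {b | ∃ a ∈ S, SnakeLE n w a b}

/-- The alternating word `L R L R ⋯` (letter `i` is `L` for odd `i`),
defining the snake poset `S_n = P(ε L R L R ⋯)`. -/
def altWord : ℕ → Letter := fun i => if i % 2 = 1 then Letter.L else Letter.R

/-- Flipping a letter `L ↔ R`. -/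
def Letter.flip : Letter → Letter
  | Letter.L => Letter.R
  | Letter.R => Letter.L

/-- The swap operation `f_i`: flip all letters with index `≥ i`. -/
def swapFrom (w : ℕ → Letter) (i : ℕ) : ℕ → Letter :=
  fun j => if i ≤ j then (w j).flip else w j

/-- Membership in `𝒱`: the letter sequence `w₁ ⋯ w_n` contains neither `LRL` nor
`RLR` as a consecutive substring. -/
def InV (n : ℕ) (w : ℕ → Letter) : Prop :=
  ∀ i, 1 ≤ i → i + 2 ≤ n → w i = w (i + 1) ∨ w (i + 1) = w (i + 2)

/-- The order on `{0, …, 2n+5}` making `P̂(w)`: the poset `P(w)` (elements `0, …, 2n+3`)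
with a new maximum `2n+4` and a new minimum `2n+5` adjoined. -/
def SnakeHatLE (n : ℕ) (w : ℕ → Letter) (a b : ℕ) : Prop :=
  a = 2 * n + 5 ∨ b = 2 * n + 4 ∨ (a < 2 * n + 4 ∧ b < 2 * n + 4 ∧ SnakeLE n w a b)

/-- The lattice `P̂(w)`: `P(w)` with a new minimum `0̂ = 2n+5` and maximum `1̂ = 2n+4`. -/
def SnakeHat (n : ℕ) (w : ℕ → Letter) : Type := Fin (2 * n + 6)

instance (n : ℕ) (w : ℕ → Letter) : PartialOrder (SnakeHat n w) where
  le a b := SnakeHatLE n w a.1 b.1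
  le_refl a := by
    by_cases h5 : a.1 = 2 * n + 5
    · exact Or.inl h5
    · by_cases h4 : a.1 = 2 * n + 4
      · exact Or.inr (Or.inl h4)
      · have := a.2
        exact Or.inr (Or.inr ⟨by omega, by omega, Relation.ReflTransGen.refl⟩)
  le_trans a b c hab hbc := by
    rcases hab with h | h | ⟨ha, hb, hab⟩
    · exact Or.inl h
    · rcases hbc with h' | h' | ⟨hb', hc, hbc⟩
      · exact absurd h' (by omega)
      · exact Or.inr (Or.inl h')
      · exact absurd h (by omega)
    · rcases hbc with h' | h' | ⟨hb', hc, hbc⟩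
      · exact absurd h' (by omega)
      · exact Or.inr (Or.inl h')
      · exact Or.inr (Or.inr ⟨ha, hc, Relation.ReflTransGen.trans hab hbc⟩)
  le_antisymm a b h1 h2 := by
    apply Fin.ext
    rcases h1 with h | h | ⟨ha, hb, hab⟩ <;>
      rcases h2 with h' | h' | ⟨ha', hb', hba⟩ <;>
        first
          | omega
          | exact Nat.le_antisymm (snakeLE_le hba) (snakeLE_le hab)

/-- An element `x` of a (finite) lattice is meet-irreducible if it is not the maximum
element and whenever `x` is the meet (greatest lower bound) of `y` and `z`,
one has `x = y` or `x = z`. -/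
def MeetIrred {α : Type*} [PartialOrder α] (x : α) : Prop :=
  ¬IsTop x ∧ ∀ y z : α, IsGLB {y, z} x → x = y ∨ x = z

/-- The poset `Q_w` of meet-irreducible elements of `P̂(w)`, as an induced subposet. -/
abbrev SnakeQ (n : ℕ) (w : ℕ → Letter) : Type :=
  {x : SnakeHat n w // MeetIrred x}

/-- The vertex set of the order polytope `O(α)` of a finite poset `α`: the 0/1 indicator
vectors of the filters of `α`. -/
def OPVertexSet (α : Type*) [PartialOrder α] : Set (α → ℝ) :=
  {v | ∃ A : Set α, (∀ a ∈ A, ∀ b, a ≤ b → b ∈ A) ∧ v = A.indicator fun _ => (1 : ℝ)}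

/-- A circuit of a point configuration: an affinely dependent set all of whose proper
subsets are affinely independent. -/
def IsAffCircuit {α : Type*} (Z : Set (α → ℝ)) : Prop :=
  ¬AffineIndependent ℝ (Subtype.val : Z → (α → ℝ)) ∧
    ∀ Y : Set (α → ℝ), Y ⊂ Z → AffineIndependent ℝ (Subtype.val : Y → (α → ℝ))

/-- The adjacency relation of the graph `G(w)` on vertices `{0, 1, …, n}`:
consecutive indices are adjacent, and `i` and `i+2` are adjacent when
`w (i+1) ≠ w (i+2)` (a turn of the word). -/
def snakeAdj (n : ℕ) (w : ℕ → Letter) (i j : ℕ) : Prop :=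
  (j = i + 1 ∧ j ≤ n) ∨ (i = j + 1 ∧ i ≤ n) ∨
    (j = i + 2 ∧ j ≤ n ∧ w (i + 1) ≠ w (i + 2)) ∨
    (i = j + 2 ∧ i ≤ n ∧ w (j + 1) ≠ w (j + 2))

/-- `𝒢(w)`: the collection of nonempty subsets of `{0, …, n}` inducing connected
subgraphs of `G(w)`. -/
def GSets (n : ℕ) (w : ℕ → Letter) : Set (Set ℕ) :=
  {S | S.Nonempty ∧ (∀ i ∈ S, i ≤ n) ∧
    ∀ a ∈ S, ∀ b ∈ S,
      Relation.ReflTransGen (fun x y => x ∈ S ∧ y ∈ S ∧ snakeAdj n w x y) a b}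

/-!
Counting linear extensions by their least element gives `e(P) = ∑ e(P ∖ x)` over the minimal
elements `x` of `P`. Past the last turn `k` the word is straight, so the even elements
`2k+4, 2k+6, …` of `P(w)` form a chain. Let `g r j` count the linear extensions of the filter
made of `0, …, 2(k+r)+1` and the chain `2(k+r)+2, …, 2(k+r)+2j+2`; removing the least element
`2(k+r)+3` of `P(w₀ ⋯ w_{k+r})` shows `g r 0 = v_{k+r}`. On the straight part, splitting off
the two minimal elements gives `g (r+1) (j+1) = g (r+1) j + g r (j+2)` and
`g (r+1) 0 = g r 1 + g r 0`. At the turn, the element of `{2k+1, 2k+2}` not covered by `2k+4` is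
minimal; once it is removed, the chain hangs below `P(w₀ ⋯ w_{k-1})` and nothing else, so its
elements are forced to come first and `g 0 (j+1) = g 0 j + v_{k-1}`. These are the recurrences of
Catalan's triangle, whose boundary entries are Catalan numbers.
-/

open Finset

section LinearExtension

variable {α : Type*}

theorem minimal_iff_forall_not_rel {c : α → α → Prop} (hc : ∀ a, ¬ c a a) {s : Finset α}
    (hs : ∀ a ∈ s, ∀ b, c a b → b ∈ s) {x : α} :
    (∀ y ∈ s, Relation.ReflTransGen c y x → y = x) ↔ ∀ z ∈ s, ¬ c z x := by
  refine ⟨fun h z hz hzx => hc x (h z hz (.single hzx) ▸ hzx), fun h y hy hyx => ?_⟩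
  rcases (Relation.ReflTransGen.cases_tail_iff c y x).1 hyx with rfl | ⟨b, hyb, hbx⟩
  · rfl
  · have hb : b ∈ s := by
      clear hbx
      induction hyb with
      | refl => exact hy
      | tail _ hcov ih => exact hs _ ih _ hcov
    exact absurd hbx (h b hb)

theorem monotone_iff_forall_lt_not_rel {N : ℕ} (r : α → α → Prop) (f : α ≃ Fin N) :
    (∀ a b, r a b → f a ≤ f b) ↔ ∀ i j, i < j → ¬ r (f.symm j) (f.symm i) := by
  constructor
  · intro h i j hij hr
    have := h _ _ hr
    simp only [Equiv.apply_symm_apply] at this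
    exact absurd hij (not_lt.2 this)
  · intro h a b hr
    by_contra hlt
    exact h (f b) (f a) (not_le.1 hlt) (by simpa using hr)

variable [DecidableEq α]

open Classical in
/-- A linear extension of `r` on `s` is recorded as the enumeration of `s` it induces: a list of
the elements of `s` in which no element is `r`-below an earlier one. -/
noncomputable def linExts (r : α → α → Prop) (s : Finset α) : Finset (List α) :=
  s.val.lists.toFinset.filter fun l => l.Pairwise fun a b => ¬ r b a

variable {r : α → α → Prop} {s : Finset α}

theorem mem_linExts {l : List α} :
    l ∈ linExts r s ↔ (l : Multiset α) = s.val ∧ l.Pairwise fun a b => ¬ r b a := by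
  simp [linExts, Multiset.mem_lists_iff, eq_comm]

theorem linExts_empty : linExts r ∅ = {[]} := by
  ext l
  simp only [mem_linExts, empty_val, Multiset.coe_eq_zero, mem_singleton]
  exact ⟨And.left, fun h => ⟨h, h ▸ List.Pairwise.nil⟩⟩

theorem linExts_eq_biUnion (hs : s.Nonempty) {M : Finset α}
    (hM : ∀ x, x ∈ M ↔ x ∈ s ∧ ∀ y ∈ s, r y x → y = x) :
    linExts r s = M.biUnion fun x =>
      (linExts r (s.erase x)).map ⟨List.cons x, List.cons_injective⟩ := by
  ext l
  simp only [mem_biUnion, mem_map, mem_linExts, Function.Embedding.coeFn_mk, hM, erase_val]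
  constructor
  · rintro ⟨hl, hpw⟩
    obtain ⟨x, t, rfl⟩ : ∃ x t, l = x :: t := by
      cases l with
      | nil => simp [eq_comm, hs.ne_empty] at hl
      | cons x t => exact ⟨x, t, rfl⟩
    rw [List.pairwise_cons] at hpw
    have hx : x ∈ s := mem_def.2 (by rw [← hl]; simp)
    refine ⟨x, ⟨hx, fun y hy hyx => ?_⟩, t, ⟨?_, hpw.2⟩, rfl⟩
    · by_contra hne
      have : y ∈ t := by
        have : y ∈ (↑(x :: t) : Multiset α) := by rw [hl]; exact hy
        simpa [hne] using this
      exact hpw.1 y this hyx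
    · rw [← hl, ← Multiset.cons_coe, Multiset.erase_cons_head]
  · rintro ⟨x, ⟨hx, hmin⟩, t, ⟨ht, hpw⟩, rfl⟩
    refine ⟨by rw [← Multiset.cons_coe, ht, Multiset.cons_erase (mem_def.1 hx)], ?_⟩
    refine List.pairwise_cons.2 ⟨fun y hy hyx => ?_, hpw⟩
    have hy' : y ∈ s.erase x := mem_def.2 (by rw [erase_val, ← ht]; exact hy)
    exact (mem_erase.1 hy').1 (hmin y (mem_erase.1 hy').2 hyx)

theorem card_linExts_eq_sum (hs : s.Nonempty) {M : Finset α}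
    (hM : ∀ x, x ∈ M ↔ x ∈ s ∧ ∀ y ∈ s, r y x → y = x) :
    #(linExts r s) = ∑ x ∈ M, #(linExts r (s.erase x)) := by
  rw [linExts_eq_biUnion hs hM, card_biUnion]
  · simp
  · intro x _ y _ hxy
    simp only [Function.onFun, disjoint_left, mem_map, Function.Embedding.coeFn_mk]
    rintro _ ⟨t, _, rfl⟩ ⟨t', _, h⟩
    exact hxy (List.cons_eq_cons.1 h).1.symm

theorem card_linExts_of_unique_min {a : α} (ha : a ∈ s)
    (hmin : ∀ x ∈ s, (∀ y ∈ s, r y x → y = x) ↔ x = a) :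
    #(linExts r s) = #(linExts r (s.erase a)) := by
  rw [card_linExts_eq_sum ⟨a, ha⟩ (M := {a}), sum_singleton]
  intro x
  rw [mem_singleton]
  exact ⟨fun h => h ▸ ⟨ha, (hmin a ha).2 rfl⟩, fun h => (hmin x h.1).1 h.2⟩

theorem card_linExts_of_min_pair {a b : α} (ha : a ∈ s) (hb : b ∈ s) (hab : a ≠ b)
    (hmin : ∀ x ∈ s, (∀ y ∈ s, r y x → y = x) ↔ x = a ∨ x = b) :
    #(linExts r s) = #(linExts r (s.erase a)) + #(linExts r (s.erase b)) := by
  rw [card_linExts_eq_sum ⟨a, ha⟩ (M := {a, b}), sum_pair hab]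
  intro x
  rw [mem_insert, mem_singleton]
  refine ⟨fun h => ?_, fun h => (hmin x h.1).1 h.2⟩
  rcases h with rfl | rfl
  exacts [⟨ha, (hmin _ ha).2 (Or.inl rfl)⟩, ⟨hb, (hmin _ hb).2 (Or.inr rfl)⟩]

theorem linExts_congr {r' : α → α → Prop} (h : ∀ a ∈ s, ∀ b ∈ s, r a b ↔ r' a b) :
    linExts r s = linExts r' s := by
  ext l
  simp only [mem_linExts, and_congr_right_iff]
  intro hl
  have hmem : ∀ {a}, a ∈ l → a ∈ s := fun ha => mem_def.2 (by rw [← hl]; exact ha)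
  exact List.Pairwise.iff_of_mem fun ha hb => not_congr (h _ (hmem hb) _ (hmem ha))

end LinearExtension

theorem card_monotone_equiv_eq_card_linExts (N : ℕ) (r : ℕ → ℕ → Prop) :
    Nat.card {f : Fin N ≃ Fin N // ∀ a b : Fin N, r a b → f a ≤ f b} =
      #(linExts r (range N)) := by
  rw [← Nat.card_eq_finsetCard]
  let enum : (Fin N ≃ Fin N) → List ℕ := fun f => List.ofFn fun i => (f.symm i : ℕ)
  have enum_mem : ∀ f : {f : Fin N ≃ Fin N // ∀ a b : Fin N, r a b → f a ≤ f b},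
      enum f.1 ∈ linExts r (range N) := by
    rintro ⟨f, hf⟩
    refine mem_linExts.2 ⟨?_, List.pairwise_ofFn.2 ((monotone_iff_forall_lt_not_rel _ f).1 hf)⟩
    change (List.ofFn fun i => (f.symm i : ℕ) : Multiset ℕ) = _
    rw [range_val, Multiset.range, Multiset.coe_eq_coe, List.perm_ext_iff_of_nodup
      (List.nodup_ofFn.2 fun i j h => f.symm.injective (Fin.ext h)) List.nodup_range]
    intro a
    simp only [List.mem_ofFn, List.mem_range]
    exact ⟨by rintro ⟨i, rfl⟩; exact (f.symm i).2, fun ha => ⟨f ⟨a, ha⟩, by simp⟩⟩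
  refine Nat.card_eq_of_bijective (fun f => ⟨enum f.1, enum_mem f⟩) ⟨?_, ?_⟩
  · intro f g hfg
    have h := List.ofFn_injective (Subtype.ext_iff.1 hfg)
    exact Subtype.ext (Equiv.symm_bijective.injective
      (Equiv.ext fun i => Fin.ext (congrFun h i)))
  · rintro ⟨l, hl⟩
    obtain ⟨hl, hpw⟩ := mem_linExts.1 hl
    have hnd : l.Nodup := by rw [← Multiset.coe_nodup, hl]; exact (range N).nodup
    have hlen : l.length = N := by rw [← Multiset.coe_card, hl]; simp
    have hlt : ∀ i : Fin l.length, l.get i < N := fun i => by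
      rw [← mem_range, mem_def, ← hl]; exact List.get_mem l i
    let g : Fin N → Fin N := fun i => ⟨l.get (i.cast hlen.symm), hlt _⟩
    have hg : Function.Injective g := fun i j hij =>
      Fin.cast_injective _ (hnd.get_inj_iff.1 (Fin.ext_iff.1 hij))
    let e := Equiv.ofBijective g (Finite.injective_iff_bijective.1 hg)
    have henum : enum e.symm = l :=
      List.ext_get (by simp [enum, hlen]) fun i _ _ => by simp [enum, e, g]
    refine ⟨⟨e.symm, (monotone_iff_forall_lt_not_rel _ _).2 ?_⟩, Subtype.ext henum⟩
    rw [← henum] at hpw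
    exact List.pairwise_ofFn.1 hpw

/-- `ballot r j = (j + 2) / (r + j + 2) * (2r + j + 1).choose r`, an entry of Catalan's triangle. -/
def ballot : ℕ → ℕ → ℕ
  | 0, _ => 1
  | r + 1, 0 => ballot r 1 + ballot r 0
  | r + 1, j + 1 => ballot (r + 1) j + ballot r (j + 2)

theorem ballot_zero_left (j : ℕ) : ballot 0 j = 1 := by rw [ballot]

theorem ballot_succ_zero (r : ℕ) : ballot (r + 1) 0 = ballot r 1 + ballot r 0 := by rw [ballot]

theorem ballot_succ_succ (r j : ℕ) :
    ballot (r + 1) (j + 1) = ballot (r + 1) j + ballot r (j + 2) := by rw [ballot]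

theorem ballot_one (j : ℕ) : ballot 1 j = j + 2 := by
  induction j with
  | zero => simp [ballot_succ_zero, ballot_zero_left]
  | succ j ih => rw [ballot_succ_succ, ih, ballot_zero_left]

theorem ballot_add_choose (r j : ℕ) :
    ballot (r + 1) j + (2 * r + j + 3).choose r = (2 * r + j + 3).choose (r + 1) := by
  induction r generalizing j with
  | zero => simp [ballot_one]
  | succ r ih =>
    induction j with
    | zero =>
      have ih1 := ih 1
      have ih0 := ih 0
      have p1 := Nat.choose_succ_succ' (2 * r + 4) (r + 1)
      have p2 := Nat.choose_succ_succ' (2 * r + 3) (r + 1)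
      have p3 := Nat.choose_succ_succ' (2 * r + 4) r
      have p4 := Nat.choose_succ_succ' (2 * r + 3) r
      have hsymm := Nat.choose_symm_of_eq_add (show 2 * r + 3 = (r + 2) + (r + 1) by ring)
      rw [ballot_succ_zero]
      ring_nf at *
      omega
    | succ j ihj =>
      have ih2 := ih (j + 2)
      have p1 := Nat.choose_succ_succ' (2 * r + j + 5) (r + 1)
      have p2 := Nat.choose_succ_succ' (2 * r + j + 5) r
      rw [ballot_succ_succ]
      ring_nf at *
      omega

theorem ballot_zero_right (r : ℕ) : ballot r 0 = catalan (r + 1) := by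
  cases r with
  | zero => simp [ballot_zero_left]
  | succ r =>
    have h := ballot_add_choose r 0
    have hsucc := Nat.choose_succ_right_eq (2 * r + 3) r
    have hsymm := Nat.choose_symm_of_eq_add (show 2 * r + 3 = (r + 2) + (r + 1) by ring)
    have hpascal := Nat.choose_succ_succ' (2 * r + 3) (r + 1)
    have hcat := succ_mul_catalan_eq_centralBinom (r + 2)
    rw [Nat.centralBinom, show 2 * (r + 2) = 2 * r + 3 + 1 by ring] at hcat
    rw [show 2 * r + 3 - r = r + 3 by omega] at hsucc
    refine Nat.eq_of_mul_eq_mul_left (show 0 < r + 3 by omega) ?_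
    simp only [add_zero] at h
    nlinarith

theorem add_two_mul_ballot_mul_eq {g : ℕ → ℕ → ℕ} {N B : ℕ}
    (h0 : ∀ j, j + 1 ≤ N → g 0 (j + 1) = g 0 j + B)
    (h1 : ∀ r, r + 1 ≤ N → g (r + 1) 0 = g r 1 + g r 0)
    (h2 : ∀ r j, r + j + 2 ≤ N → g (r + 1) (j + 1) = g (r + 1) j + g r (j + 2)) :
    ∀ r j, r + j ≤ N →
      g r j + 2 * ballot r j * B = ballot r j * g 0 0 + ballot (r + 1) j * B := by
  intro r
  induction r with
  | zero =>
    intro j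
    induction j with
    | zero => intro; rw [ballot_zero_left, ballot_one]; ring
    | succ j ih =>
      intro hj
      have := ih (by omega)
      rw [ballot_zero_left, ballot_one] at this ⊢
      rw [h0 j (by omega)]
      nlinarith
  | succ r ih =>
    intro j
    induction j with
    | zero =>
      intro hr
      have e1 := ih 1 (by omega)
      have e0 := ih 0 (by omega)
      rw [h1 r (by omega), ballot_succ_zero, ballot_succ_zero (r + 1)]
      nlinarith
    | succ j ihj =>
      intro hrj
      have e1 := ihj (by omega)
      have e2 := ih (j + 2) (by omega)
      rw [h2 r j (by omega), ballot_succ_succ, ballot_succ_succ (r + 1)]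
      nlinarith

section Snake

variable {n : ℕ} {w : ℕ → Letter}

theorem snakeSide_cases (w : ℕ → Letter) (m : ℕ) :
    snakeSide w m = 2 * m - 1 ∨ snakeSide w m = 2 * m := by
  unfold snakeSide
  split_ifs <;> simp

theorem snakeSide_eq_two_mul {i : ℕ} (hi : 2 ≤ i) (h : w (i - 1) = w i) :
    snakeSide w i = 2 * i := by
  unfold snakeSide
  rw [if_neg]
  rintro (⟨rfl, -⟩ | ⟨-, h'⟩)
  exacts [absurd hi (by norm_num), h' h]

theorem snakeSide_eq_two_mul_sub_one {i : ℕ} (hi : 2 ≤ i) (h : w (i - 1) ≠ w i) :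
    snakeSide w i = 2 * i - 1 := by
  unfold snakeSide
  rw [if_pos (Or.inr ⟨hi, h⟩)]

theorem snakeCov_iff {a b : ℕ} :
    SnakeCov n w a b ↔ ((a = 1 ∨ a = 2) ∧ b = 0) ∨
      (a % 2 = 1 ∧ 3 ≤ a ∧ a ≤ 2 * n + 3 ∧ (b = a - 2 ∨ b = a - 1)) ∨
      (a % 2 = 0 ∧ 4 ≤ a ∧ a ≤ 2 * n + 2 ∧ b = snakeSide w (a / 2 - 1)) := by
  constructor
  · rintro (_ | _ | _ | _ | ⟨m, h1, h2⟩ | ⟨m, h1, h2⟩ | ⟨m, h1, h2⟩)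
    any_goals omega
    refine Or.inr (Or.inr ⟨by omega, by omega, by omega, ?_⟩)
    rw [show (2 * m + 2) / 2 - 1 = m by omega]
  · rintro (⟨ha | ha, rfl⟩ | ⟨hodd, h3, hn, hb⟩ | ⟨hev, h4, hn, rfl⟩)
    · exact ha ▸ SnakeCov.cov10
    · exact ha ▸ SnakeCov.cov20
    · obtain ⟨m, rfl⟩ : ∃ m, a = 2 * m + 3 := ⟨(a - 3) / 2, by omega⟩
      rcases Nat.eq_zero_or_pos m with rfl | hm
      · rcases hb with rfl | rfl
        exacts [SnakeCov.cov31, SnakeCov.cov32]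
      · rcases hb with rfl | rfl
        · exact (show 2 * m + 3 - 2 = 2 * m + 1 by omega) ▸ SnakeCov.covOdd m hm (by omega)
        · exact (show 2 * m + 3 - 1 = 2 * m + 2 by omega) ▸ SnakeCov.covBot m hm (by omega)
    · obtain ⟨m, rfl⟩ : ∃ m, a = 2 * m + 2 := ⟨a / 2 - 1, by omega⟩
      rw [show (2 * m + 2) / 2 - 1 = m by omega]
      exact SnakeCov.covSide m (by omega) (by omega)

/- The elements covering `y` are `1` and `2` if `y = 0`; otherwise the odd element
`2 ⌊(y - 1) / 2⌋ + 3` and, when `snakeSide` picks `y`, the even element `2 ⌈y / 2⌉ + 2`. -/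
theorem forall_not_snakeCov_iff {s : Finset ℕ} {y : ℕ} :
    (∀ z ∈ s, ¬ SnakeCov n w z y) ↔
      (y = 0 → 1 ∉ s ∧ 2 ∉ s) ∧
      (0 < y → y ≤ 2 * n + 2 → 2 * ((y - 1) / 2) + 3 ∉ s) ∧
      (snakeSide w ((y + 1) / 2) = y → 1 ≤ (y + 1) / 2 → (y + 1) / 2 ≤ n →
        2 * ((y + 1) / 2) + 2 ∉ s) := by
  constructor
  · intro h
    refine ⟨fun hy => ⟨fun h1 => h 1 h1 (by rw [snakeCov_iff]; omega),
      fun h2 => h 2 h2 (by rw [snakeCov_iff]; omega)⟩,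
      fun hy hyn hz => h _ hz (by rw [snakeCov_iff]; omega),
      fun hside h1 h2 hz => h _ hz
        (snakeCov_iff.2 (Or.inr (Or.inr ⟨by omega, by omega, by omega, ?_⟩)))⟩
    rw [show (2 * ((y + 1) / 2) + 2) / 2 - 1 = (y + 1) / 2 by omega, hside]
  · rintro ⟨h0, hodd, hside⟩ z hz hcov
    rcases snakeCov_iff.1 hcov with
      ⟨rfl | rfl, rfl⟩ | ⟨hzodd, h3, hzn, hb⟩ | ⟨hzev, h4, hzn, hb⟩
    · exact (h0 rfl).1 hz
    · exact (h0 rfl).2 hz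
    · exact hodd (by omega) (by omega) (by convert hz using 1; omega)
    · have hm : (y + 1) / 2 = z / 2 - 1 := by
        rcases snakeSide_cases w (z / 2 - 1) with h | h <;> omega
      exact hside (by rw [hm, hb]) (by omega) (by omega) (by convert hz using 1; omega)

theorem snakeLE_minimal_iff {s : Finset ℕ} (hs : ∀ a ∈ s, ∀ b, SnakeCov n w a b → b ∈ s)
    {y : ℕ} :
    (∀ x ∈ s, SnakeLE n w x y → x = y) ↔
      (y = 0 → 1 ∉ s ∧ 2 ∉ s) ∧
      (0 < y → y ≤ 2 * n + 2 → 2 * ((y - 1) / 2) + 3 ∉ s) ∧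
      (snakeSide w ((y + 1) / 2) = y → 1 ≤ (y + 1) / 2 → (y + 1) / 2 ≤ n →
        2 * ((y + 1) / 2) + 2 ∉ s) :=
  (minimal_iff_forall_not_rel (fun _ h => (snakeCov_lt h).false) hs).trans
    forall_not_snakeCov_iff

theorem snakeLE_iff_of_le {m a b : ℕ} (hmn : m ≤ n) (ha : a ≤ 2 * m + 3) :
    SnakeLE m w a b ↔ SnakeLE n w a b := by
  have hcov : ∀ {a b}, a ≤ 2 * m + 3 → (SnakeCov m w a b ↔ SnakeCov n w a b) := fun ha => by
    rw [snakeCov_iff, snakeCov_iff]; omega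
  constructor
  · intro h
    induction h with
    | refl => exact .refl
    | tail _ hc ih => exact ih.tail ((hcov (by have := snakeCov_iff.1 hc; omega)).1 hc)
  · intro h
    induction h using Relation.ReflTransGen.head_induction_on with
    | refl => exact .refl
    | head hc _ ih => exact .head ((hcov ha).2 hc) (ih (by have := snakeCov_lt hc; omega))

/-- `snakeChain m j = {0, …, 2m+1} ∪ {2m+2, 2m+4, …, 2m+2j}`: for `m ≥ 1`, the poset
`P(w₀ ⋯ w_{m-1})` together with `j` even elements of `P(w)`. -/
def snakeChain (m j : ℕ) : Finset ℕ :=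
  (range (2 * m + 2 * j + 2)).filter fun x => x ≤ 2 * m + 1 ∨ x % 2 = 0

theorem mem_snakeChain {m j x : ℕ} :
    x ∈ snakeChain m j ↔ x < 2 * m + 2 * j + 2 ∧ (x ≤ 2 * m + 1 ∨ x % 2 = 0) := by
  simp [snakeChain]

theorem card_linExts_snakeChain_succ_zero {m : ℕ} (hm : m ≤ n) :
    #(linExts (SnakeLE n w) (snakeChain (m + 1) 0)) =
      #(linExts (SnakeLE n w) (snakeChain m 1)) := by
  have hs : ∀ a ∈ snakeChain (m + 1) 0, ∀ b, SnakeCov n w a b →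
      b ∈ snakeChain (m + 1) 0 := by
    intro a ha b hab
    have := snakeCov_lt hab
    simp only [mem_snakeChain] at ha ⊢
    omega
  rw [card_linExts_of_unique_min (a := 2 * m + 3) (by simp only [mem_snakeChain]; omega)]
  · congr 2
    ext x
    simp only [mem_erase, mem_snakeChain]
    omega
  · intro x hx
    rw [snakeLE_minimal_iff hs]
    simp only [mem_snakeChain, or_true, and_true] at hx ⊢
    omega

theorem card_linExts_snakeChain_succ_one {m : ℕ} (hm : m ≤ n) :
    #(linExts (SnakeLE n w) (snakeChain (m + 1) 1)) =
      #(linExts (SnakeLE n w) (snakeChain (m + 1) 0)) +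
        #(linExts (SnakeLE n w) (snakeChain m 2)) := by
  have hs : ∀ a ∈ snakeChain (m + 1) 1, ∀ b, SnakeCov n w a b →
      b ∈ snakeChain (m + 1) 1 := by
    intro a ha b hab
    have := snakeCov_lt hab
    simp only [mem_snakeChain] at ha ⊢
    omega
  rw [card_linExts_of_min_pair (a := 2 * m + 4) (b := 2 * m + 3)
    (by simp only [mem_snakeChain]; omega) (by simp only [mem_snakeChain]; omega) (by omega)]
  · congr 3 <;> ext x <;> simp only [mem_erase, mem_snakeChain] <;> omega
  · intro x hx
    rw [snakeLE_minimal_iff hs]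
    simp only [mem_snakeChain, or_true, and_true] at hx ⊢
    omega

theorem card_linExts_snakeChain_split {k j v : ℕ} (hkj : k + j + 1 ≤ n)
    (hv : v = 2 * k + 1 ∨ v = 2 * k + 2) (hside : snakeSide w (k + 1) ≠ v)
    (hstr : ∀ i, k + 2 ≤ i → i ≤ k + j + 1 → snakeSide w i = 2 * i) :
    #(linExts (SnakeLE n w) (snakeChain k (j + 2))) =
      #(linExts (SnakeLE n w) (snakeChain k (j + 1))) +
        #(linExts (SnakeLE n w) ((snakeChain k (j + 2)).erase v)) := by
  have hs : ∀ a ∈ snakeChain k (j + 2), ∀ b, SnakeCov n w a b →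
      b ∈ snakeChain k (j + 2) := by
    intro a ha b hab
    have := snakeSide_cases w (a / 2 - 1)
    have := hstr (a / 2 - 1)
    rw [snakeCov_iff] at hab
    simp only [mem_snakeChain] at ha ⊢
    omega
  -- The other element of `{2k+1, 2k+2}` is covered by `2k+4`.
  rw [card_linExts_of_min_pair (a := 2 * k + 2 * j + 4) (b := v)
    (by simp only [mem_snakeChain]; omega) (by simp only [mem_snakeChain]; omega) (by omega)]
  · congr 3
    ext x
    simp only [mem_erase, mem_snakeChain]
    omega
  · intro x hx
    rw [snakeLE_minimal_iff hs]
    simp only [mem_snakeChain, or_true, and_true] at hx ⊢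
    rcases eq_or_ne ((x + 1) / 2) (k + 1) with hx1 | hx1
    · have := snakeSide_cases w (k + 1)
      rw [hx1]
      omega
    · have := snakeSide_cases w ((x + 1) / 2)
      have := hstr ((x + 1) / 2)
      omega

theorem card_linExts_snakeChain_straight {k j : ℕ} (hkj : k + j + 2 ≤ n)
    (hstr : ∀ i, k + 2 ≤ i → i ≤ k + j + 2 → snakeSide w i = 2 * i) :
    #(linExts (SnakeLE n w) (snakeChain (k + 1) (j + 2))) =
      #(linExts (SnakeLE n w) (snakeChain (k + 1) (j + 1))) +
        #(linExts (SnakeLE n w) (snakeChain k (j + 3))) := by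
  have hside : snakeSide w (k + 2) ≠ 2 * (k + 1) + 1 := by
    rw [hstr (k + 2) le_rfl (by omega)]; omega
  rw [card_linExts_snakeChain_split (by omega) (Or.inl rfl) hside
    fun i h1 h2 => hstr i (by omega) (by omega)]
  congr 3
  ext x
  simp only [mem_erase, mem_snakeChain]
  omega

theorem card_linExts_snakeChain_erase {k v : ℕ} (hv : v = 2 * k + 2 ∨ k = 0 ∧ v = 1)
    (hside : snakeSide w (k + 1) ≠ v) (j : ℕ) (hkj : k + j ≤ n)
    (hstr : ∀ i, k + 2 ≤ i → i ≤ k + j → snakeSide w i = 2 * i) :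
    #(linExts (SnakeLE n w) ((snakeChain k (j + 1)).erase v)) =
      #(linExts (SnakeLE n w) ((snakeChain k 1).erase v)) := by
  induction j with
  | zero => rfl
  | succ j ih =>
    rw [← ih (by omega) fun i h1 h2 => hstr i h1 (by omega)]
    have hs : ∀ a ∈ (snakeChain k (j + 2)).erase v, ∀ b, SnakeCov n w a b →
        b ∈ (snakeChain k (j + 2)).erase v := by
      intro a ha b hab
      have := snakeSide_cases w (k + 1)
      have := snakeSide_cases w (a / 2 - 1)
      have := hstr (a / 2 - 1)
      rw [snakeCov_iff] at hab
      simp only [mem_erase, mem_snakeChain] at ha ⊢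
      rcases eq_or_ne (a / 2 - 1) (k + 1) with ha1 | ha1
      · rw [ha1] at hab; omega
      · omega
    rw [card_linExts_of_unique_min (a := 2 * k + 2 * j + 4)
      (by simp only [mem_erase, mem_snakeChain]; omega)]
    · congr 2
      ext x
      simp only [mem_erase, mem_snakeChain]
      omega
    · intro x hx
      rw [snakeLE_minimal_iff hs]
      simp only [mem_erase, mem_snakeChain, or_true, and_true] at hx ⊢
      rcases eq_or_ne ((x + 1) / 2) (k + 1) with hx1 | hx1
      · have := snakeSide_cases w (k + 1)
        rw [hx1]
        omega
      · have := snakeSide_cases w ((x + 1) / 2)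
        have := hstr ((x + 1) / 2)
        omega

theorem card_linExts_snakeChain_turn {k j v : ℕ} (hkj : k + j + 1 ≤ n)
    (hv : v = 2 * k + 2 ∨ k = 0 ∧ v = 1) (hside : snakeSide w (k + 1) ≠ v)
    (hstr : ∀ i, k + 2 ≤ i → i ≤ k + j + 1 → snakeSide w i = 2 * i) :
    #(linExts (SnakeLE n w) (snakeChain k (j + 2))) =
      #(linExts (SnakeLE n w) (snakeChain k (j + 1))) +
        #(linExts (SnakeLE n w) ((snakeChain k 1).erase v)) := by
  rw [card_linExts_snakeChain_split hkj (by omega) hside hstr,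
    card_linExts_snakeChain_erase hv hside (j + 1) hkj hstr]

theorem card_linExts_snakeChain_zero_one_erase {v : ℕ} (hv : v = 1 ∨ v = 2) :
    #(linExts (SnakeLE n w) ((snakeChain 0 1).erase v)) = 1 := by
  have hs : ∀ t ⊆ range 3, 0 ∈ t → ∀ a ∈ t, ∀ b, SnakeCov n w a b → b ∈ t := by
    intro t ht h0 a ha b hab
    have := mem_range.1 (ht ha)
    rw [snakeCov_iff] at hab
    obtain rfl : b = 0 := by omega
    exact h0
  have hsub : (snakeChain 0 1).erase v ⊆ range 3 := fun x hx => by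
    simp only [mem_erase, mem_snakeChain, mem_range] at hx ⊢; omega
  rw [card_linExts_of_unique_min (a := 3 - v) (by simp only [mem_erase, mem_snakeChain]; omega),
    card_linExts_of_unique_min (a := 0) (by simp only [mem_erase, mem_snakeChain]; omega)]
  · rw [show (((snakeChain 0 1).erase v).erase (3 - v)).erase 0 = ∅ by
      ext x; simp only [mem_erase, mem_snakeChain, notMem_empty, iff_false]; omega, linExts_empty,
      card_singleton]
  · intro x hx
    rw [snakeLE_minimal_iff (hs _ ((erase_subset _ _).trans hsub)
      (by simp only [mem_erase, mem_snakeChain]; omega))]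
    simp only [mem_erase, mem_snakeChain, or_true, and_true] at hx ⊢
    omega
  · intro x hx
    rw [snakeLE_minimal_iff (hs _ hsub (by simp only [mem_erase, mem_snakeChain]; omega))]
    simp only [mem_erase, mem_snakeChain, or_true, and_true] at hx ⊢
    omega

theorem linExtCount_eq_card_linExts {m : ℕ} (hmn : m ≤ n) :
    linExtCount m w = #(linExts (SnakeLE n w) (snakeChain m 1)) := by
  rw [← card_linExts_snakeChain_succ_zero hmn,
    show snakeChain (m + 1) 0 = range (2 * m + 4) by ext x; simp [mem_snakeChain]; omega,
    ← linExts_congr fun a ha b _ => snakeLE_iff_of_le hmn (by rw [mem_range] at ha; omega)]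
  exact card_monotone_equiv_eq_card_linExts (2 * m + 4) (SnakeLE m w)

theorem exists_turn_erase {k : ℕ} (hkn : k ≤ n) (hturn : k = 0 ∨ w k ≠ w (k + 1)) :
    ∃ v, (v = 2 * k + 2 ∨ k = 0 ∧ v = 1) ∧ snakeSide w (k + 1) ≠ v ∧
      #(linExts (SnakeLE n w) ((snakeChain k 1).erase v)) =
        if k = 0 then 1 else linExtCount (k - 1) w := by
  rcases Nat.eq_zero_or_pos k with rfl | hk
  · have := snakeSide_cases w 1
    refine ⟨3 - snakeSide w 1, ?_, ?_, ?_⟩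
    · omega
    · rw [zero_add]; omega
    · rw [if_pos rfl, card_linExts_snakeChain_zero_one_erase (by omega)]
  · have hside := snakeSide_eq_two_mul_sub_one (i := k + 1) (by omega)
      (by simpa using hturn.resolve_left hk.ne')
    refine ⟨2 * k + 2, Or.inl rfl, by omega, ?_⟩
    obtain ⟨m, rfl⟩ : ∃ m, k = m + 1 := ⟨k - 1, by omega⟩
    rw [if_neg (by omega), Nat.add_sub_cancel,
      linExtCount_eq_card_linExts (n := n) (m := m) (by omega),
      ← card_linExts_snakeChain_succ_zero (n := n) (m := m) (by omega)]
    congr 2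
    ext x
    simp only [mem_erase, mem_snakeChain]
    omega

end Snake

theorem stmt3_general (n k : ℕ) (w : ℕ → Letter) (hk : k < n)
    (hk2 : k = 0 ∨ w k ≠ w n) (hk3 : ∀ j, k < j → j < n → w j = w n) :
    linExtCount n w +
        2 * catalan (n - k + 1) * (if k = 0 then 1 else linExtCount (k - 1) w) =
      catalan (n - k + 1) * linExtCount k w +
        catalan (n - k + 2) * (if k = 0 then 1 else linExtCount (k - 1) w) := by
  have hw : ∀ i, k < i → i ≤ n → w i = w n := fun i h1 h2 =>
    (Nat.lt_or_eq_of_le h2).elim (hk3 i h1) (fun h => h ▸ rfl)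
  have hstr : ∀ i, k + 2 ≤ i → i ≤ n → snakeSide w i = 2 * i := fun i h1 h2 =>
    snakeSide_eq_two_mul (by omega) ((hw _ (by omega) (by omega)).trans (hw i (by omega) h2).symm)
  obtain ⟨v, hv, hside, hB⟩ := exists_turn_erase (n := n) (w := w) hk.le
    (hk2.imp_right fun h => by rwa [hw (k + 1) (by omega) (by omega)])
  let g r j := #(linExts (SnakeLE n w) (snakeChain (k + r) (j + 1)))
  have key := add_two_mul_ballot_mul_eq (g := g) (N := n - k)
    (fun j hj => card_linExts_snakeChain_turn (j := j) (by omega) hv hside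
      fun i h1 h2 => hstr i h1 (by omega))
    (fun r hr => by
      change #(linExts _ (snakeChain (k + r + 1) 1)) =
        #(linExts _ (snakeChain (k + r) 2)) + #(linExts _ (snakeChain (k + r) 1))
      rw [card_linExts_snakeChain_succ_one, card_linExts_snakeChain_succ_zero, add_comm] <;>
        omega)
    (fun r j hrj => card_linExts_snakeChain_straight (k := k + r) (j := j) (by omega)
      fun i h1 h2 => hstr i (by omega) (by omega))
    (n - k) 0 le_rfl
  simp only [g, ballot_zero_right, Nat.add_sub_cancel' hk.le, add_zero, zero_add] at key
  rw [← hB, linExtCount_eq_card_linExts le_rfl, linExtCount_eq_card_linExts hk.le,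
    show n - k + 2 = n - k + 1 + 1 by ring]
  exact key

theorem stmt3 (n k : ℕ) (w : ℕ → Letter) (hn : 1 ≤ n) (hk : k < n)
    (hk2 : k = 0 ∨ w k ≠ w n) (hk3 : ∀ j, k < j → j < n → w j = w n) :
    linExtCount n w +
        2 * catalan (n - k + 1) * (if k = 0 then 1 else linExtCount (k - 1) w) =
      catalan (n - k + 1) * linExtCount k w +
        catalan (n - k + 2) * (if k = 0 then 1 else linExtCount (k - 1) w) :=
  stmt3_general n k w hk hk2 hk3
end

section
/- For every generalized snake word w of length n, e(S_n) ≤ e(P(w)) ≤ e(𝓛_n), where S_n = P(εLRLR⋯) is the snake poset built from the alternating word of length n beginning with L and 𝓛_n = P(εLL⋯L) is the ladder poset built from the all-L word of length n; equivalently, the normalized volume of O(P(w)) is at least that of O(S_n) and at most that of O(𝓛_n). -/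
/-!
Write `P_n` for `P(ε w₁ ⋯ w_n)` and `s = snakeSide w (n+1)`. `P_{n+1}` is `P_n` with a new
minimum `2n+5` and a new element `2n+4` covered by `s`; deleting both from a linear extension
shows that the extensions of `P_{n+1}` with `2n+4` at position `k+1` correspond to the
extensions of `P_n` with `s` at position `≥ k`. Hence the tail counts of the position of `2n+4`
in `P_{n+1}` are monotone in those of `s` in `P_n`.

When the word goes straight at `n+2`, the next `s` is `2n+4` itself. When it turns, the next `s`
is the old minimum `2n+3`, which can only occupy positions `1` or `2`; its tail counts
`(e(P_{n+1}), e(P_{n+1}), e(P_n), 0, …)` are dominated by those of `2n+4`. The alternating word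
always turns and the ladder always goes straight, so by induction on `n` the tail counts of `s`,
and at `k = 0` the numbers of linear extensions, are smallest for `S_n` and largest for `𝓛_n`.
For `n = 0` all three agree, since exchanging `1` and `2` is an automorphism of `P(ε)`.
-/
open Relation

section SnakeOrder

variable {n : ℕ} {w : ℕ → Letter} {a b : ℕ}

theorem snakeSide_eq_or (w : ℕ → Letter) (n : ℕ) :
    snakeSide w (n + 1) = 2 * n + 1 ∨ snakeSide w (n + 1) = 2 * n + 2 := by
  unfold snakeSide; split <;> omega

theorem snakeSide_altWord (n : ℕ) : snakeSide altWord (n + 2) = 2 * n + 3 := by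
  have hturn : altWord (n + 2 - 1) ≠ altWord (n + 2) := by
    unfold altWord; split_ifs <;> first | omega | decide
  unfold snakeSide
  rw [if_pos (Or.inr ⟨by omega, hturn⟩)]
  omega

theorem snakeSide_ladder (n : ℕ) : snakeSide (fun _ => Letter.L) (n + 2) = 2 * n + 4 := by
  unfold snakeSide
  rw [if_neg (by simp)]
  omega

theorem SnakeCov.succ (h : SnakeCov n w a b) : SnakeCov (n + 1) w a b := by
  cases h with
  | cov10 => exact .cov10
  | cov20 => exact .cov20
  | cov31 => exact .cov31
  | cov32 => exact .cov32
  | covOdd m h1 h2 => exact .covOdd m h1 (by omega)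
  | covBot m h1 h2 => exact .covBot m h1 (by omega)
  | covSide m h1 h2 => exact .covSide m h1 (by omega)

theorem SnakeLE.succ (h : SnakeLE n w a b) : SnakeLE (n + 1) w a b :=
  ReflTransGen.mono (fun _ _ => SnakeCov.succ) _ _ h

theorem SnakeCov.of_succ (h : SnakeCov (n + 1) w a b) (ha : a < 2 * n + 4) :
    SnakeCov n w a b := by
  cases h with
  | cov10 => exact .cov10
  | cov20 => exact .cov20
  | cov31 => exact .cov31
  | cov32 => exact .cov32
  | covOdd m h1 h2 => exact .covOdd m h1 (by omega)
  | covBot m h1 h2 => exact .covBot m h1 (by omega)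
  | covSide m h1 h2 => exact .covSide m h1 (by omega)

theorem SnakeLE.of_succ (h : SnakeLE (n + 1) w a b) (ha : a < 2 * n + 4) : SnakeLE n w a b := by
  induction h using ReflTransGen.head_induction_on with
  | refl => exact .refl
  | head hcov _ ih => exact .head (hcov.of_succ ha) (ih (by have := snakeCov_lt hcov; omega))

theorem SnakeCov.eq_snakeSide {c : ℕ} (h : SnakeCov (n + 1) w a c) (ha : a = 2 * n + 4) :
    c = snakeSide w (n + 1) := by
  cases h with
  | covSide m _ _ =>
    obtain rfl : m = n + 1 := by omega
    rfl
  | _ => omega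

theorem SnakeLE.of_succ_new (h : SnakeLE (n + 1) w (2 * n + 4) b) :
    b = 2 * n + 4 ∨ SnakeLE n w (snakeSide w (n + 1)) b := by
  rcases h.cases_head with rfl | ⟨c, hc, hcb⟩
  · exact .inl rfl
  · right
    obtain rfl := hc.eq_snakeSide rfl
    exact SnakeLE.of_succ hcb (by have := snakeSide_eq_or w n; omega)

theorem snakeLE_new_side (n : ℕ) (w : ℕ → Letter) :
    SnakeLE (n + 1) w (2 * n + 4) (snakeSide w (n + 1)) :=
  .single (.covSide (n + 1) (by omega) le_rfl)

theorem snakeLE_bot (n : ℕ) (w : ℕ → Letter) {x : ℕ} (hx : x < 2 * n + 4) :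
    SnakeLE n w (2 * n + 3) x := by
  induction n generalizing x with
  | zero =>
    interval_cases x
    · exact .head .cov31 (.single .cov10)
    · exact .single .cov31
    · exact .single .cov32
    · exact .refl
  | succ n ih =>
    have hodd : SnakeCov (n + 1) w (2 * n + 5) (2 * n + 3) := .covOdd (n + 1) (by omega) le_rfl
    have hbot : SnakeCov (n + 1) w (2 * n + 5) (2 * n + 4) := .covBot (n + 1) (by omega) le_rfl
    obtain hx | rfl | rfl : x < 2 * n + 4 ∨ x = 2 * n + 4 ∨ x = 2 * n + 5 := by omega
    · exact .head hodd (ih hx).succ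
    · exact .single hbot
    · exact .refl

end SnakeOrder

instance (n : ℕ) (w : ℕ → Letter) : Fintype (SnakePoset n w) :=
  inferInstanceAs (Fintype (Fin (2 * n + 4)))

abbrev LinExt (n : ℕ) (w : ℕ → Letter) : Type :=
  {f : SnakePoset n w ≃ Fin (2 * n + 4) // ∀ a b : SnakePoset n w, a ≤ b → f a ≤ f b}

namespace LinExt

variable {n : ℕ} {w : ℕ → Letter}

/-- The position of the element `x` of `P(w)`, with junk value `0` when `x ≥ 2n+4`. -/
def pos (f : LinExt n w) (x : ℕ) : ℕ :=
  if h : x < 2 * n + 4 then (f.1 (⟨x, h⟩ : Fin (2 * n + 4))).1 else 0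

theorem pos_val (f : LinExt n w) (a : SnakePoset n w) :
    f.pos (a : Fin (2 * n + 4)).1 = (f.1 a).1 := by
  rw [pos, dif_pos (Fin.isLt a)]
  rfl

theorem pos_lt (f : LinExt n w) (x : ℕ) : f.pos x < 2 * n + 4 := by
  unfold pos; split
  · exact (f.1 _).2
  · omega

theorem pos_injOn (f : LinExt n w) {x y : ℕ} (hx : x < 2 * n + 4) (hy : y < 2 * n + 4)
    (h : f.pos x = f.pos y) : x = y := by
  simp only [pos, dif_pos hx, dif_pos hy] at h
  simpa using congrArg Fin.val (f.1.injective (Fin.ext h))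

theorem pos_mono (f : LinExt n w) {x y : ℕ} (hx : x < 2 * n + 4) (h : SnakeLE n w x y) :
    f.pos x ≤ f.pos y := by
  have hy : y < 2 * n + 4 := by have := snakeLE_le h; omega
  rw [pos, pos, dif_pos hx, dif_pos hy]
  exact f.2 _ _ h

theorem exists_pos_eq (f : LinExt n w) {p : ℕ} (hp : p < 2 * n + 4) :
    ∃ x < 2 * n + 4, f.pos x = p := by
  refine ⟨(f.1.symm ⟨p, hp⟩ : Fin (2 * n + 4)).1, Fin.isLt _, ?_⟩
  rw [pos_val, Equiv.apply_symm_apply]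

theorem ext {f g : LinExt n w} (h : ∀ x < 2 * n + 4, f.pos x = g.pos x) : f = g :=
  Subtype.ext <| Equiv.ext fun a => Fin.ext <| by
    rw [← pos_val, ← pos_val]
    exact h _ (Fin.isLt _)

theorem pos_eq_zero_iff (f : LinExt n w) {x : ℕ} (hx : x < 2 * n + 4) :
    f.pos x = 0 ↔ x = 2 * n + 3 := by
  obtain ⟨y, hy, hy0⟩ := f.exists_pos_eq (p := 0) (by omega)
  have hbot : f.pos (2 * n + 3) = 0 := by
    have := f.pos_mono (by omega) (snakeLE_bot n w hy)
    omega
  constructor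
  · intro h0
    exact f.pos_injOn hx (by omega) (h0.trans hbot.symm)
  · rintro rfl
    exact hbot

noncomputable def ofPos (v : ℕ → ℕ) (hlt : ∀ x < 2 * n + 4, v x < 2 * n + 4)
    (hinj : ∀ x < 2 * n + 4, ∀ y < 2 * n + 4, v x = v y → x = y)
    (hmono : ∀ x < 2 * n + 4, ∀ y, SnakeLE n w x y → v x ≤ v y) : LinExt n w :=
  ⟨Equiv.ofBijective (fun a : Fin (2 * n + 4) => (⟨v a.1, hlt _ a.2⟩ : Fin (2 * n + 4)))
    ((Fintype.bijective_iff_injective_and_card _).2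
      ⟨fun a b hab => Fin.ext (hinj _ a.2 _ b.2 (congrArg Fin.val hab)), rfl⟩),
    fun a _ hab => hmono _ (Fin.isLt a) _ hab⟩

theorem pos_ofPos {v : ℕ → ℕ} {hlt : ∀ x < 2 * n + 4, v x < 2 * n + 4}
    {hinj : ∀ x < 2 * n + 4, ∀ y < 2 * n + 4, v x = v y → x = y}
    {hmono : ∀ x < 2 * n + 4, ∀ y, SnakeLE n w x y → v x ≤ v y} {x : ℕ}
    (hx : x < 2 * n + 4) : (ofPos v hlt hinj hmono).pos x = v x := by
  rw [pos, dif_pos hx]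
  rfl

end LinExt

section Tails

variable {α β : Type*} [Finite α] [Finite β]

theorem card_subtype_le_eq_add (u : α → ℕ) (k : ℕ) :
    Nat.card {a // k ≤ u a} = Nat.card {a // u a = k} + Nat.card {a // k + 1 ≤ u a} := by
  rw [← Nat.card_sum]
  have hdisj : Disjoint (fun a => u a = k) (fun a => k + 1 ≤ u a) :=
    Pi.disjoint_iff.2 fun _ => disjoint_iff_inf_le.2 fun ⟨_, _⟩ => by omega
  exact Nat.card_congr <|
    (Equiv.subtypeEquivRight (q := fun a => u a = k ∨ k + 1 ≤ u a) fun a => by omega).trans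
      (subtypeOrEquiv _ _ hdisj)

theorem card_subtype_le_mono {u : α → ℕ} {v : β → ℕ} {N : ℕ} (hu : ∀ a, u a < N)
    (h : ∀ j, Nat.card {a // u a = j} ≤ Nat.card {b // v b = j}) (k : ℕ) :
    Nat.card {a // k ≤ u a} ≤ Nat.card {b // k ≤ v b} := by
  induction hd : N - k generalizing k with
  | zero =>
    have : IsEmpty {a // k ≤ u a} := ⟨fun a => by have := hu a.1; have := a.2; omega⟩
    rw [Nat.card_of_isEmpty]
    exact Nat.zero_le _
  | succ d ih =>
    rw [card_subtype_le_eq_add u, card_subtype_le_eq_add v]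
    exact add_le_add (h k) (ih (k + 1) (by omega))

end Tails

noncomputable def countPosEq (n : ℕ) (w : ℕ → Letter) (x k : ℕ) : ℕ :=
  Nat.card {f : LinExt n w // f.pos x = k}

noncomputable def countPosGe (n : ℕ) (w : ℕ → Letter) (x k : ℕ) : ℕ :=
  Nat.card {f : LinExt n w // k ≤ f.pos x}

section Counting

variable {n : ℕ} {w : ℕ → Letter} {x : ℕ}

theorem countPosGe_zero : countPosGe n w x 0 = linExtCount n w :=
  Nat.card_congr (Equiv.subtypeUnivEquiv fun _ => Nat.zero_le _)

theorem countPosGe_one (hx : x < 2 * n + 3) : countPosGe n w x 1 = linExtCount n w :=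
  Nat.card_congr <| Equiv.subtypeUnivEquiv fun f =>
    Nat.one_le_iff_ne_zero.2 fun h => by have := (f.pos_eq_zero_iff (by omega)).1 h; omega

theorem countPosEq_zero (hx : x < 2 * n + 3) : countPosEq n w x 0 = 0 := by
  have : IsEmpty {f : LinExt n w // f.pos x = 0} :=
    ⟨fun f => by have := (f.1.pos_eq_zero_iff (by omega)).1 f.2; omega⟩
  exact Nat.card_of_isEmpty

theorem countPosGe_eq_add (k : ℕ) :
    countPosGe n w x k = countPosEq n w x k + countPosGe n w x (k + 1) :=
  card_subtype_le_eq_add _ k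

theorem countPosGe_le_of_countPosEq_le {w' : ℕ → Letter}
    (h : ∀ j, countPosEq n w x j ≤ countPosEq n w' x j) (k : ℕ) :
    countPosGe n w x k ≤ countPosGe n w' x k :=
  card_subtype_le_mono (fun f : LinExt n w => f.pos_lt x) h k

end Counting

namespace LinExt

variable {n : ℕ} {w : ℕ → Letter} {k x : ℕ}

theorem pos_old (f : LinExt (n + 1) w) (hx : x < 2 * n + 4) :
    f.pos x ≠ 0 ∧ f.pos x ≠ f.pos (2 * n + 4) ∧ f.pos x < 2 * n + 6 := by
  refine ⟨fun h => ?_, fun h => ?_, f.pos_lt x⟩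
  · have := (f.pos_eq_zero_iff (by omega)).1 h
    omega
  · have := f.pos_injOn (by omega) (by omega) h
    omega

/-- Deletes `2n+5` and `2n+4`, which sit at positions `0` and `k+1`, and closes the gaps. -/
noncomputable def restrict (f : LinExt (n + 1) w) (hf : f.pos (2 * n + 4) = k + 1) :
    LinExt n w :=
  ofPos (fun x => f.pos x - 1 - if k + 1 < f.pos x then 1 else 0)
    (fun x hx => by
      have := f.pos_old hx
      have := f.pos_lt (2 * n + 4)
      split_ifs <;> omega)
    (fun x hx y hy hxy => by
      by_contra hne
      have := f.pos_old hx
      have := f.pos_old hy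
      have := mt (f.pos_injOn (by omega) (by omega)) hne
      split_ifs at hxy <;> omega)
    (fun x hx y hxy => by
      have := f.pos_mono (by omega) hxy.succ
      have := f.pos_old hx
      have := f.pos_old (x := y) (by have := snakeLE_le hxy; omega)
      split_ifs <;> omega)

theorem pos_restrict (f : LinExt (n + 1) w) (hf : f.pos (2 * n + 4) = k + 1)
    (hx : x < 2 * n + 4) :
    (f.restrict hf).pos x = f.pos x - 1 - if k + 1 < f.pos x then 1 else 0 :=
  pos_ofPos hx

theorem le_pos_restrict_snakeSide (f : LinExt (n + 1) w) (hf : f.pos (2 * n + 4) = k + 1) :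
    k ≤ (f.restrict hf).pos (snakeSide w (n + 1)) := by
  have hside := snakeSide_eq_or w n
  have hle := f.pos_mono (by omega) (snakeLE_new_side n w)
  have hne := f.pos_old (x := snakeSide w (n + 1)) (by omega)
  rw [pos_restrict f hf (by omega)]
  split_ifs <;> omega

/-- Inserts `2n+5` at position `0` and `2n+4` at position `k+1`. -/
noncomputable def extend (g : LinExt n w) (hg : k ≤ g.pos (snakeSide w (n + 1))) :
    LinExt (n + 1) w :=
  ofPos (fun x => if x = 2 * n + 5 then 0 else if x = 2 * n + 4 then k + 1
      else g.pos x + 1 + if k ≤ g.pos x then 1 else 0)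
    (fun x hx => by
      have := g.pos_lt x
      have := g.pos_lt (snakeSide w (n + 1))
      split_ifs <;> omega)
    (fun x hx y hy hxy => by
      have hinj : x < 2 * n + 4 → y < 2 * n + 4 → g.pos x = g.pos y → x = y := g.pos_injOn
      split_ifs at hxy <;> omega)
    (fun x hx y hxy => by
      have hyx := snakeLE_le hxy
      obtain rfl | rfl | hx : x = 2 * n + 5 ∨ x = 2 * n + 4 ∨ x < 2 * n + 4 := by omega
      · simp
      · rcases hxy.of_succ_new with rfl | hside
        · rfl
        · have hs := snakeSide_eq_or w n
          have := g.pos_mono (by omega) hside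
          have := snakeLE_le hside
          simp only [if_neg (show 2 * n + 4 ≠ 2 * n + 5 by omega)]
          split_ifs <;> omega
      · have := g.pos_mono hx (hxy.of_succ hx)
        split_ifs <;> omega)

theorem pos_extend_new (g : LinExt n w) (hg : k ≤ g.pos (snakeSide w (n + 1))) :
    (g.extend hg).pos (2 * n + 4) = k + 1 := by
  rw [extend, pos_ofPos (by omega), if_neg (by omega), if_pos rfl]

theorem pos_extend_old (g : LinExt n w) (hg : k ≤ g.pos (snakeSide w (n + 1)))
    (hx : x < 2 * n + 4) :
    (g.extend hg).pos x = g.pos x + 1 + if k ≤ g.pos x then 1 else 0 := by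
  rw [extend, pos_ofPos (by omega), if_neg (by omega), if_neg (by omega)]

noncomputable def newPosEquiv (n : ℕ) (w : ℕ → Letter) (k : ℕ) :
    {f : LinExt (n + 1) w // f.pos (2 * n + 4) = k + 1} ≃
      {g : LinExt n w // k ≤ g.pos (snakeSide w (n + 1))} where
  toFun f := ⟨f.1.restrict f.2, le_pos_restrict_snakeSide f.1 f.2⟩
  invFun g := ⟨g.1.extend g.2, pos_extend_new g.1 g.2⟩
  left_inv f := Subtype.ext <| LinExt.ext fun x hx => by
    obtain rfl | rfl | hx : x = 2 * n + 5 ∨ x = 2 * n + 4 ∨ x < 2 * n + 4 := by omega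
    · rw [(pos_eq_zero_iff _ hx).2 rfl, (pos_eq_zero_iff _ hx).2 rfl]
    · rw [pos_extend_new, f.2]
    · have := f.1.pos_old hx
      have := f.2
      rw [pos_extend_old _ _ hx, pos_restrict _ _ hx]
      split_ifs <;> omega
  right_inv g := Subtype.ext <| LinExt.ext fun x hx => by
    rw [pos_restrict _ _ hx, pos_extend_old _ _ hx]
    split_ifs <;> omega

end LinExt

theorem countPosEq_succ_new (n : ℕ) (w : ℕ → Letter) (k : ℕ) :
    countPosEq (n + 1) w (2 * n + 4) (k + 1) = countPosGe n w (snakeSide w (n + 1)) k :=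
  Nat.card_congr (LinExt.newPosEquiv n w k)

theorem LinExt.pos_prevBot {n : ℕ} {w : ℕ → Letter} (f : LinExt (n + 1) w) :
    (f.pos (2 * n + 3) = 1 ∨ f.pos (2 * n + 3) = 2) ∧
      (f.pos (2 * n + 3) = 2 ↔ f.pos (2 * n + 4) = 1) := by
  have hbot : f.pos (2 * n + 5) = 0 := (f.pos_eq_zero_iff (by omega)).2 rfl
  have hpos := f.pos_old (x := 2 * n + 3) (by omega)
  -- `2n+3` lies below every old element, so only `2n+4` and `2n+5` can come before it
  have hnew : ∀ p < f.pos (2 * n + 3), p ≠ 0 → f.pos (2 * n + 4) = p := by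
    intro p hp hp0
    obtain ⟨x, hx, rfl⟩ := f.exists_pos_eq (p := p) (by omega)
    obtain hx | rfl | rfl : x < 2 * n + 4 ∨ x = 2 * n + 4 ∨ x = 2 * n + 5 := by omega
    · have := f.pos_mono (by omega) (snakeLE_bot n w hx).succ
      omega
    · rfl
    · exact absurd hbot hp0
  have h1 := hnew 1
  have h2 := hnew 2
  omega

noncomputable def turnCount (n : ℕ) (w : ℕ → Letter) (k : ℕ) : ℕ :=
  if k ≤ 1 then linExtCount (n + 1) w else if k = 2 then linExtCount n w else 0

theorem countPosGe_succ_prevBot (n : ℕ) (w : ℕ → Letter) (k : ℕ) :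
    countPosGe (n + 1) w (2 * n + 3) k = turnCount n w k := by
  unfold turnCount
  split_ifs with hk1 hk2
  · interval_cases k
    · exact countPosGe_zero
    · exact countPosGe_one (by omega)
  · subst hk2
    calc countPosGe (n + 1) w (2 * n + 3) 2 = countPosEq (n + 1) w (2 * n + 4) (0 + 1) :=
          Nat.card_congr <| Equiv.subtypeEquivRight fun f => by
            have := f.pos_prevBot
            omega
      _ = linExtCount n w := by rw [countPosEq_succ_new, countPosGe_zero]
  · have : IsEmpty {f : LinExt (n + 1) w // k ≤ f.pos (2 * n + 3)} :=
      ⟨fun f => by have := f.1.pos_prevBot; have := f.2; omega⟩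
    exact Nat.card_of_isEmpty

theorem turnCount_le_countPosGe_new (n : ℕ) (w : ℕ → Letter) (k : ℕ) :
    turnCount n w k ≤ countPosGe (n + 1) w (2 * n + 4) k := by
  unfold turnCount
  split_ifs with hk1 hk2
  · interval_cases k
    · exact countPosGe_zero.ge
    · exact (countPosGe_one (by omega)).ge
  · subst hk2
    have hside := snakeSide_eq_or w n
    calc linExtCount n w = countPosEq (n + 1) w (2 * n + 4) (1 + 1) := by
          rw [countPosEq_succ_new, countPosGe_one (by omega)]
      _ ≤ countPosGe (n + 1) w (2 * n + 4) 2 := by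
          rw [countPosGe_eq_add]
          exact Nat.le_add_right _ _
  · exact Nat.zero_le _

theorem turnCount_mono {n : ℕ} {w w' : ℕ → Letter}
    (h₁ : linExtCount (n + 1) w ≤ linExtCount (n + 1) w')
    (h₀ : linExtCount n w ≤ linExtCount n w') (k : ℕ) :
    turnCount n w k ≤ turnCount n w' k := by
  unfold turnCount
  split_ifs
  exacts [h₁, h₀, le_rfl]

theorem turnCount_le_countPosGe_snakeSide (n : ℕ) (w : ℕ → Letter) (k : ℕ) :
    turnCount n w k ≤ countPosGe (n + 1) w (snakeSide w (n + 2)) k := by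
  obtain h | h : snakeSide w (n + 2) = 2 * n + 3 ∨ snakeSide w (n + 2) = 2 * n + 4 :=
    snakeSide_eq_or w (n + 1)
  · rw [h, countPosGe_succ_prevBot]
  · rw [h]
    exact turnCount_le_countPosGe_new n w k

theorem countPosGe_snakeSide_le_countPosGe_new (n : ℕ) (w : ℕ → Letter) (k : ℕ) :
    countPosGe (n + 1) w (snakeSide w (n + 2)) k ≤ countPosGe (n + 1) w (2 * n + 4) k := by
  obtain h | h : snakeSide w (n + 2) = 2 * n + 3 ∨ snakeSide w (n + 2) = 2 * n + 4 :=
    snakeSide_eq_or w (n + 1)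
  · rw [h, countPosGe_succ_prevBot]
    exact turnCount_le_countPosGe_new n w k
  · rw [h]

theorem countPosGe_new_le_of_snakeSide_le {n : ℕ} {w w' : ℕ → Letter}
    (h : ∀ k, countPosGe n w (snakeSide w (n + 1)) k ≤ countPosGe n w' (snakeSide w' (n + 1)) k)
    (k : ℕ) : countPosGe (n + 1) w (2 * n + 4) k ≤ countPosGe (n + 1) w' (2 * n + 4) k := by
  refine countPosGe_le_of_countPosEq_le (fun j => ?_) k
  cases j with
  | zero => rw [countPosEq_zero (by omega), countPosEq_zero (by omega)]
  | succ j => rw [countPosEq_succ_new, countPosEq_succ_new]; exact h j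

section Diamond

variable {w w' : ℕ → Letter} {a b : ℕ}

theorem SnakeCov.swap_diamond (h : SnakeCov 0 w a b) :
    SnakeCov 0 w' (Equiv.swap 1 2 a) (Equiv.swap 1 2 b) := by
  have h0 : Equiv.swap 1 2 0 = 0 := Equiv.swap_apply_of_ne_of_ne (by omega) (by omega)
  have h3 : Equiv.swap 1 2 3 = 3 := Equiv.swap_apply_of_ne_of_ne (by omega) (by omega)
  cases h with
  | cov10 => simpa [h0] using .cov20
  | cov20 => simpa [h0] using .cov10
  | cov31 => simpa [h3] using .cov32
  | cov32 => simpa [h3] using .cov31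
  | _ => omega

theorem SnakeLE.swap_diamond (h : SnakeLE 0 w a b) :
    SnakeLE 0 w' (Equiv.swap 1 2 a) (Equiv.swap 1 2 b) :=
  ReflTransGen.lift (Equiv.swap 1 2) (fun _ _ => SnakeCov.swap_diamond) _ _ h

theorem swap_one_two_lt_four {x : ℕ} (hx : x < 4) : Equiv.swap 1 2 x < 4 := by
  rw [Equiv.swap_apply_def]
  split_ifs <;> omega

noncomputable def LinExt.swapDiamond (f : LinExt 0 w) : LinExt 0 w' :=
  ofPos (fun x => f.pos (Equiv.swap 1 2 x)) (fun _ _ => f.pos_lt _)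
    (fun _ hx _ hy h => (Equiv.swap 1 2).injective
      (f.pos_injOn (swap_one_two_lt_four hx) (swap_one_two_lt_four hy) h))
    (fun _ hx _ h => f.pos_mono (swap_one_two_lt_four hx) h.swap_diamond)

theorem LinExt.pos_swapDiamond (f : LinExt 0 w) {x : ℕ} (hx : x < 4) :
    (f.swapDiamond : LinExt 0 w').pos x = f.pos (Equiv.swap 1 2 x) :=
  pos_ofPos hx

noncomputable def LinExt.swapDiamondEquiv (w w' : ℕ → Letter) : LinExt 0 w ≃ LinExt 0 w' where
  toFun := swapDiamond
  invFun := swapDiamond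
  left_inv f := LinExt.ext fun x hx => by
    rw [pos_swapDiamond _ hx, pos_swapDiamond _ (swap_one_two_lt_four hx), Equiv.swap_apply_self]
  right_inv f := LinExt.ext fun x hx => by
    rw [pos_swapDiamond _ hx, pos_swapDiamond _ (swap_one_two_lt_four hx), Equiv.swap_apply_self]

theorem countPosGe_diamond_swap (w w' : ℕ → Letter) {x : ℕ} (hx : x < 4) (k : ℕ) :
    countPosGe 0 w x k = countPosGe 0 w' (Equiv.swap 1 2 x) k :=
  Nat.card_congr <| (LinExt.swapDiamondEquiv w w').subtypeEquiv fun f => by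
    rw [LinExt.swapDiamondEquiv, Equiv.coe_fn_mk,
      LinExt.pos_swapDiamond _ (swap_one_two_lt_four hx), Equiv.swap_apply_self]

theorem countPosGe_diamond_snakeSide (w w' : ℕ → Letter) (k : ℕ) :
    countPosGe 0 w (snakeSide w 1) k = countPosGe 0 w' (snakeSide w' 1) k := by
  have h12 (u u' : ℕ → Letter) : countPosGe 0 u 1 k = countPosGe 0 u' 2 k := by
    simpa using countPosGe_diamond_swap u u' (x := 1) (by omega) k
  have h21 (u u' : ℕ → Letter) : countPosGe 0 u 2 k = countPosGe 0 u' 1 k := by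
    simpa using countPosGe_diamond_swap u u' (x := 2) (by omega) k
  rcases snakeSide_eq_or w 0 with h | h <;> rcases snakeSide_eq_or w' 0 with h' | h' <;>
    rw [h, h']
  exacts [(h12 w w).trans (h21 w w'), h12 w w', h21 w w', (h21 w w).trans (h12 w w')]

end Diamond

theorem countPosGe_snakeSide_bounds (n : ℕ) (w : ℕ → Letter) (k : ℕ) :
    countPosGe n altWord (snakeSide altWord (n + 1)) k ≤
        countPosGe n w (snakeSide w (n + 1)) k ∧
      countPosGe n w (snakeSide w (n + 1)) k ≤
        countPosGe n (fun _ => Letter.L) (snakeSide (fun _ => Letter.L) (n + 1)) k := by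
  induction n generalizing w k with
  | zero =>
    rw [countPosGe_diamond_snakeSide w altWord,
      countPosGe_diamond_snakeSide (fun _ => Letter.L) altWord]
    exact ⟨le_rfl, le_rfl⟩
  | succ n ih =>
    have hext₁ : linExtCount (n + 1) altWord ≤ linExtCount (n + 1) w := by
      simpa only [countPosGe_zero] using
        countPosGe_new_le_of_snakeSide_le (fun k => (ih w k).1) 0
    have hext₀ : linExtCount n altWord ≤ linExtCount n w := by
      simpa only [countPosGe_zero] using (ih w 0).1
    constructor
    · calc countPosGe (n + 1) altWord (snakeSide altWord (n + 2)) k = turnCount n altWord k := by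
            rw [snakeSide_altWord, countPosGe_succ_prevBot]
        _ ≤ turnCount n w k := turnCount_mono hext₁ hext₀ k
        _ ≤ countPosGe (n + 1) w (snakeSide w (n + 2)) k :=
            turnCount_le_countPosGe_snakeSide n w k
    · calc countPosGe (n + 1) w (snakeSide w (n + 2)) k ≤ countPosGe (n + 1) w (2 * n + 4) k :=
            countPosGe_snakeSide_le_countPosGe_new n w k
        _ ≤ countPosGe (n + 1) (fun _ => Letter.L) (2 * n + 4) k :=
            countPosGe_new_le_of_snakeSide_le (fun k => (ih w k).2) k
        _ = countPosGe (n + 1) (fun _ => Letter.L) (snakeSide (fun _ => Letter.L) (n + 2)) k := by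
            rw [snakeSide_ladder]

theorem stmt7 (n : ℕ) (w : ℕ → Letter) :
    linExtCount n altWord ≤ linExtCount n w ∧
      linExtCount n w ≤ linExtCount n (fun _ => Letter.L) := by
  simpa only [countPosGe_zero] using countPosGe_snakeSide_bounds n w 0
end
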